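/- arXiv:2506.16432 — 13 statements merged into one kernel-verified Lean document; each statement's English description precedes it below -/
import Mathlib

section
/- The diagonal matrix diag(1,2,3) over the complex numbers cannot be written as a product of two 3×3 Toeplitz matrices. -/
def IsToeplitz {n : ℕ} (M : Matrix (Fin n) (Fin n) ℂ) : Prop :=
  ∀ (i j : Fin n) (hi : (i : ℕ) + 1 < n) (hj : (j : ℕ) + 1 < n),
    M i j = M ⟨i + 1, hi⟩ ⟨j + 1, hj⟩

theorem diag123_not_product_of_two_toeplitz :
    ¬ ∃ T₁ T₂ : Matrix (Fin 3) (Fin 3) ℂ,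
      IsToeplitz T₁ ∧ IsToeplitz T₂ ∧ T₁ * T₂ = Matrix.diagonal ![1, 2, 3] := by
  rintro ⟨T₁, T₂, h1, h2, hprod⟩
  have e1a : T₁ 1 1 = T₁ 0 0 := (h1 0 0 (by norm_num) (by norm_num)).symm
  have e1b : T₁ 2 2 = T₁ 0 0 := by
    rw [show (T₁ 2 2 : ℂ) = T₁ 1 1 from (h1 1 1 (by norm_num) (by norm_num)).symm, e1a]
  have e1c : T₁ 1 2 = T₁ 0 1 := (h1 0 1 (by norm_num) (by norm_num)).symm
  have e1d : T₁ 2 1 = T₁ 1 0 := (h1 1 0 (by norm_num) (by norm_num)).symm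
  have e2a : T₂ 1 1 = T₂ 0 0 := (h2 0 0 (by norm_num) (by norm_num)).symm
  have e2b : T₂ 2 2 = T₂ 0 0 := by
    rw [show (T₂ 2 2 : ℂ) = T₂ 1 1 from (h2 1 1 (by norm_num) (by norm_num)).symm, e2a]
  have e2c : T₂ 1 2 = T₂ 0 1 := (h2 0 1 (by norm_num) (by norm_num)).symm
  have e2d : T₂ 2 1 = T₂ 1 0 := (h2 1 0 (by norm_num) (by norm_num)).symm
  have key : ∀ i k : Fin 3,
      T₁ i 0 * T₂ 0 k + T₁ i 1 * T₂ 1 k + T₁ i 2 * T₂ 2 k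
        = Matrix.diagonal ![1, 2, 3] i k := by
    intro i k
    rw [← hprod, Matrix.mul_apply, Fin.sum_univ_three]
  have h00 := key 0 0
  rw [show Matrix.diagonal ![(1:ℂ),2,3] 0 0 = 1 from by simp [Matrix.diagonal_apply]] at h00
  have h11 := key 1 1
  rw [e1a, e1c, e2a, e2d] at h11
  rw [show Matrix.diagonal ![(1:ℂ),2,3] 1 1 = 2 from by simp [Matrix.diagonal_apply]] at h11
  have h22 := key 2 2
  rw [e1d, e1b, e2c, e2b] at h22
  rw [show Matrix.diagonal ![(1:ℂ),2,3] 2 2 = 3 from by simp [Matrix.diagonal_apply]] at h22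
  have h01 := key 0 1
  rw [e2a, e2d] at h01
  rw [show Matrix.diagonal ![(1:ℂ),2,3] 0 1 = 0 from by simp [Matrix.diagonal_apply]] at h01
  have h12 := key 1 2
  rw [e1a, e1c, e2c, e2b] at h12
  rw [show Matrix.diagonal ![(1:ℂ),2,3] 1 2 = 0 from by simp [Matrix.diagonal_apply]] at h12
  have h10 := key 1 0
  rw [e1a, e1c] at h10
  rw [show Matrix.diagonal ![(1:ℂ),2,3] 1 0 = 0 from by simp [Matrix.diagonal_apply]] at h10
  have h21 := key 2 1
  rw [e1d, e1b, e2a, e2d] at h21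
  rw [show Matrix.diagonal ![(1:ℂ),2,3] 2 1 = 0 from by simp [Matrix.diagonal_apply]] at h21
  have h02 := key 0 2
  rw [e2c, e2b] at h02
  rw [show Matrix.diagonal ![(1:ℂ),2,3] 0 2 = 0 from by simp [Matrix.diagonal_apply]] at h02
  have h20 := key 2 0
  rw [e1d, e1b] at h20
  rw [show Matrix.diagonal ![(1:ℂ),2,3] 2 0 = 0 from by simp [Matrix.diagonal_apply]] at h20
  have : (1 : ℂ) = 0 := by
    linear_combination (1/2 * T₁ 0 1 * T₂ 1 0 + 1/4 * T₁ 0 0 * T₂ 0 0) * h00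
      + (-1/2 * T₁ 0 1 * T₂ 1 0 + 1/2 * T₁ 1 0 * T₂ 0 1 - 1/2) * h11
      + (-1/4 * T₁ 0 0 * T₂ 0 0 - 1/2 * T₁ 1 0 * T₂ 0 1) * h22
      + (1/2 * T₁ 0 0 * T₂ 1 0 + 1/2 * T₁ 1 0 * T₂ 0 0) * h01
      + (-3/4 * T₁ 0 0 * T₂ 1 0 - 1/2 * T₁ 1 0 * T₂ 0 0) * h12
      + (-1/2 * T₁ 0 2 * T₂ 1 0 + 1/4 * T₁ 0 0 * T₂ 0 1) * h10
      + (1/2 * T₁ 1 0 * T₂ 0 2) * h21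
      + (-1/4 * T₁ 0 0 * T₂ 2 0) * h02
      + (1/4 * T₁ 0 0 * T₂ 0 2) * h20
  exact one_ne_zero this
end

section
/- Let d, e, f ∈ ℂ. If d ≠ e, e ≠ f, f ≠ d, and e ≠ 0, then the diagonal matrix diag(d,e,f) cannot be written as a product of two 3×3 complex Toeplitz matrices. -/
/-
Toeplitz matrices are persymmetric, and transposing along the antidiagonal reverses products,
so `A * B = diag(d, e, f)` forces `B * A = diag(f, e, d)`. Then `A * diag(f, e, d) = diag(d, e, f) * A`,
and the distinctness of `d, e, f` kills every entry of the middle row of `A` (the diagonal one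
through `A 1 1 = A 0 0`, the super-diagonal one through `A 1 2 = A 0 1`). Hence
`e = (A * B) 1 1 = 0`.
-/

open Matrix

def Matrix.IsPersymmetric {n : ℕ} {R : Type*} (M : Matrix (Fin n) (Fin n) R) : Prop :=
  Mᵀ.submatrix Fin.rev Fin.rev = M

theorem Matrix.IsPersymmetric.mul_comm_eq {n : ℕ} {R : Type*} [CommSemiring R]
    {A B : Matrix (Fin n) (Fin n) R} (hA : A.IsPersymmetric) (hB : B.IsPersymmetric) :
    B * A = (A * B)ᵀ.submatrix Fin.rev Fin.rev := by
  conv_lhs => rw [← hA, ← hB]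
  rw [transpose_mul, ← submatrix_mul_equiv _ _ _ Fin.revPerm]
  rfl

theorem Matrix.apply_eq_zero_of_mul_diagonal_eq_diagonal_mul {m : Type*} [Fintype m]
    [DecidableEq m] {R : Type*} [CommRing R] [NoZeroDivisors R] {A : Matrix m m R}
    {v w : m → R} (h : A * diagonal w = diagonal v * A) {i j : m} (hij : v i ≠ w j) :
    A i j = 0 := by
  have hij' : A i j * w j = v i * A i j := by
    simpa only [mul_diagonal, diagonal_mul] using congrFun (congrFun h i) j
  exact (mul_eq_zero.mp (by linear_combination hij' : (w j - v i) * A i j = 0)).resolve_left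
    (sub_ne_zero.mpr hij.symm)

theorem IsToeplitz.apply_eq_apply_add {n : ℕ} {M : Matrix (Fin n) (Fin n) ℂ} (hM : IsToeplitz M)
    (i j k : ℕ) (hi : i + k < n) (hj : j + k < n) :
    M ⟨i, by omega⟩ ⟨j, by omega⟩ = M ⟨i + k, hi⟩ ⟨j + k, hj⟩ := by
  induction k with
  | zero => rfl
  | succ k ih => exact (ih (by omega) (by omega)).trans (hM _ _ _ _)

theorem IsToeplitz.isPersymmetric {n : ℕ} {M : Matrix (Fin n) (Fin n) ℂ} (hM : IsToeplitz M) :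
    M.IsPersymmetric := by
  ext ⟨i, hi⟩ ⟨j, hj⟩
  simp only [submatrix_apply, transpose_apply]
  -- both entries lie on the diagonal through `(0, j - i)` (resp. `(i - j, 0)`)
  rcases le_total i j with hij | hji
  · have h₁ := hM.apply_eq_apply_add 0 (j - i) (n - (j + 1)) (by omega) (by omega)
    have h₂ := hM.apply_eq_apply_add 0 (j - i) i (by omega) (by omega)
    refine (Eq.trans ?_ h₁.symm).trans (h₂.trans ?_) <;> congr 1 <;> ext <;> simp <;> omega
  · have h₁ := hM.apply_eq_apply_add (i - j) 0 (n - (i + 1)) (by omega) (by omega)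
    have h₂ := hM.apply_eq_apply_add (i - j) 0 j (by omega) (by omega)
    refine (Eq.trans ?_ h₁.symm).trans (h₂.trans ?_) <;> congr 1 <;> ext <;> simp <;> omega

theorem diag_def_not_product_of_two_toeplitz (d e f : ℂ)
    (hde : d ≠ e) (hef : e ≠ f) (hfd : f ≠ d) (he : e ≠ 0) :
    ¬ ∃ T₁ T₂ : Matrix (Fin 3) (Fin 3) ℂ,
      IsToeplitz T₁ ∧ IsToeplitz T₂ ∧ T₁ * T₂ = Matrix.diagonal ![d, e, f] := by
  rintro ⟨A, B, hA, hB, hAB⟩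
  have hBA : B * A = diagonal (![d, e, f] ∘ Fin.rev) := by
    rw [hA.isPersymmetric.mul_comm_eq hB.isPersymmetric, hAB, diagonal_transpose]
    exact submatrix_diagonal_equiv _ Fin.revPerm
  have hcomm : A * diagonal (![d, e, f] ∘ Fin.rev) = diagonal ![d, e, f] * A := by
    rw [← hBA, ← hAB, Matrix.mul_assoc]
  have hrow : ∀ k, A 1 k = 0 := by
    intro k
    fin_cases k
    · exact apply_eq_zero_of_mul_diagonal_eq_diagonal_mul hcomm hef
    · exact (hA 0 0 (by norm_num) (by norm_num)).symm.trans
        (apply_eq_zero_of_mul_diagonal_eq_diagonal_mul hcomm hfd.symm)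
    · exact (hA 0 1 (by norm_num) (by norm_num)).symm.trans
        (apply_eq_zero_of_mul_diagonal_eq_diagonal_mul hcomm hde)
  apply he
  simpa [mul_apply, Fin.sum_univ_three, hrow] using (congrFun (congrFun hAB 1) 1).symm
end

section
/- Let d, e, f ∈ ℂ. If d = e, or e = f, or f = d, or e = 0, then the diagonal matrix diag(d,e,f) can be written as a product of two 3×3 complex Toeplitz matrices. -/
def IsProductOfTwoToeplitz {n : ℕ} (M : Matrix (Fin n) (Fin n) ℂ) : Prop :=
  ∃ T₁ T₂ : Matrix (Fin n) (Fin n) ℂ, IsToeplitz T₁ ∧ IsToeplitz T₂ ∧ T₁ * T₂ = M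

theorem isToeplitz_fin_three (a b c p q : ℂ) : IsToeplitz !![a, b, c; p, a, b; q, p, a] := by
  intro i j hi hj
  fin_cases i <;> fin_cases j <;> first | rfl | simp at hi hj

theorem isProductOfTwoToeplitz_diagonal_of_eq_left (d f : ℂ) :
    IsProductOfTwoToeplitz (Matrix.diagonal ![d, d, f]) :=
  ⟨!![0, 1, 0; 0, 0, 1; 1, 0, 0], !![0, 0, f; d, 0, 0; 0, d, 0],
    isToeplitz_fin_three _ _ _ _ _, isToeplitz_fin_three _ _ _ _ _, by
      rw [Matrix.mul_fin_three, Matrix.diagonal_vec3]; simp⟩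

theorem isProductOfTwoToeplitz_diagonal_of_eq_right (d e : ℂ) :
    IsProductOfTwoToeplitz (Matrix.diagonal ![d, e, e]) :=
  ⟨!![0, 0, 1; 1, 0, 0; 0, 1, 0], !![0, e, 0; 0, 0, e; d, 0, 0],
    isToeplitz_fin_three _ _ _ _ _, isToeplitz_fin_three _ _ _ _ _, by
      rw [Matrix.mul_fin_three, Matrix.diagonal_vec3]; simp⟩

theorem isProductOfTwoToeplitz_diagonal_of_middle_eq_zero (d f : ℂ) :
    IsProductOfTwoToeplitz (Matrix.diagonal ![d, 0, f]) :=
  ⟨!![0, 0, d; 0, 0, 0; f, 0, 0], !![0, 0, 1; 0, 0, 0; 1, 0, 0],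
    isToeplitz_fin_three _ _ _ _ _, isToeplitz_fin_three _ _ _ _ _, by
      rw [Matrix.mul_fin_three, Matrix.diagonal_vec3]; simp⟩

theorem isProductOfTwoToeplitz_diagonal_of_outer_eq {e : ℂ} (he : e ≠ 0) (d : ℂ) :
    IsProductOfTwoToeplitz (Matrix.diagonal ![d, e, d]) :=
  ⟨!![e, 0, d - e; 0, e, 0; -e, 0, e], !![1, 0, (e - d) / e; 0, 1, 0; 1, 0, 1],
    isToeplitz_fin_three _ _ _ _ _, isToeplitz_fin_three _ _ _ _ _, by
      rw [Matrix.mul_fin_three, Matrix.diagonal_vec3]; simp [mul_div_cancel₀ _ he]⟩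

theorem diag_degenerate_is_product_of_two_toeplitz (d e f : ℂ)
    (h : d = e ∨ e = f ∨ f = d ∨ e = 0) :
    ∃ T₁ T₂ : Matrix (Fin 3) (Fin 3) ℂ,
      IsToeplitz T₁ ∧ IsToeplitz T₂ ∧ T₁ * T₂ = Matrix.diagonal ![d, e, f] := by
  rcases h with rfl | rfl | rfl | rfl
  · exact isProductOfTwoToeplitz_diagonal_of_eq_left d f
  · exact isProductOfTwoToeplitz_diagonal_of_eq_right d e
  · obtain rfl | he := eq_or_ne e 0
    · exact isProductOfTwoToeplitz_diagonal_of_middle_eq_zero f f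
    · exact isProductOfTwoToeplitz_diagonal_of_outer_eq he f
  · exact isProductOfTwoToeplitz_diagonal_of_middle_eq_zero d f
end

section
/- Every n×n complex diagonal matrix can be written as a product of n Toeplitz matrices. -/
namespace ToeplitzAux

def Q (n : ℕ) (c : ℂ) : Matrix (Fin n) (Fin n) ℂ :=
  Matrix.of fun i j => if (i : ℕ) = (j : ℕ) + 1 then 1
    else if (i : ℕ) = 0 ∧ (j : ℕ) + 1 = n then c else 0

lemma Q_toeplitz {n : ℕ} (c : ℂ) : IsToeplitz (Q n c) := by
  intro i j hi hj
  simp only [Q, Matrix.of_apply]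
  by_cases h : (i : ℕ) = (j : ℕ) + 1
  · rw [if_pos h, if_pos (show ((⟨(i:ℕ)+1, hi⟩ : Fin n) : ℕ) = ((⟨(j:ℕ)+1, hj⟩ : Fin n) : ℕ) + 1 by
      simp; omega)]
  · rw [if_neg h, if_neg (show ¬((i:ℕ) = 0 ∧ (j:ℕ)+1 = n) by omega),
      if_neg (show ¬((⟨(i:ℕ)+1, hi⟩ : Fin n) : ℕ) = ((⟨(j:ℕ)+1, hj⟩ : Fin n) : ℕ) + 1 by
        simp; omega),
      if_neg (show ¬(((⟨(i:ℕ)+1, hi⟩ : Fin n) : ℕ) = 0 ∧ ((⟨(j:ℕ)+1, hj⟩ : Fin n) : ℕ) + 1 = n) by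
        simp)]

def P (n : ℕ) (d : Fin n → ℂ) (k : ℕ) : Matrix (Fin n) (Fin n) ℂ :=
  Matrix.of fun i j => if (i : ℕ) = (j : ℕ) + k then 1
    else if (i : ℕ) + n = (j : ℕ) + k then d i else 0

lemma P_zero {n : ℕ} (d : Fin n → ℂ) : P n d 0 = 1 := by
  ext i j
  simp only [P, Matrix.of_apply, Matrix.one_apply]
  by_cases h : (i : ℕ) = (j : ℕ)
  · rw [if_pos (by omega), if_pos (Fin.ext h)]
  · rw [if_neg (by omega), if_neg (by omega), if_neg (fun hh => h (congrArg Fin.val hh))]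

lemma P_mul {n : ℕ} (d : Fin n → ℂ) (k : ℕ) (hk : k < n) :
    P n d k * Q n (d ⟨k, hk⟩) = P n d (k + 1) := by
  ext i j
  rw [Matrix.mul_apply]
  by_cases hj : (j : ℕ) + 1 < n
  · rw [Finset.sum_eq_single (⟨(j : ℕ) + 1, hj⟩ : Fin n)]
    · have h1 : Q n (d ⟨k, hk⟩) ⟨(j:ℕ)+1, hj⟩ j = 1 := by
        simp only [Q, Matrix.of_apply]
        rw [if_pos trivial]
      rw [h1, mul_one]
      simp only [P, Matrix.of_apply]
      by_cases h : (i : ℕ) = (j : ℕ) + (k + 1)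
      · rw [if_pos (by omega), if_pos h]
      · rw [if_neg (by omega), if_neg h]
        by_cases h2 : (i : ℕ) + n = (j : ℕ) + (k + 1)
        · rw [if_pos (by omega), if_pos h2]
        · rw [if_neg (by omega), if_neg h2]
    · intro b _ hb
      have hb' : (b : ℕ) ≠ (j : ℕ) + 1 := fun h => hb (Fin.ext h)
      simp only [Q, Matrix.of_apply]
      rw [if_neg hb', if_neg (by omega), mul_zero]
    · intro h; exact absurd (Finset.mem_univ _) h
  · have hj' : (j : ℕ) + 1 = n := by omega
    have hn : 0 < n := by omega
    rw [Finset.sum_eq_single (⟨0, hn⟩ : Fin n)]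
    · have h1 : Q n (d ⟨k, hk⟩) ⟨0, hn⟩ j = d ⟨k, hk⟩ := by
        simp only [Q, Matrix.of_apply]
        rw [if_neg (by omega), if_pos ⟨trivial, hj'⟩]
      rw [h1]
      simp only [P, Matrix.of_apply]
      by_cases hik : (i : ℕ) = k
      · rw [if_pos (by omega), one_mul, if_neg (by omega), if_pos (by omega)]
        exact congrArg d (Fin.ext hik.symm)
      · rw [if_neg (by omega), if_neg (by omega), zero_mul,
          if_neg (by omega), if_neg (by omega)]
    · intro b _ hb
      have hb' : (b : ℕ) ≠ 0 := fun h => hb (Fin.ext h)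
      simp only [Q, Matrix.of_apply]
      rw [if_neg (by omega), if_neg (by omega), mul_zero]
    · intro h; exact absurd (Finset.mem_univ _) h

lemma take_prod {n : ℕ} (d : Fin n → ℂ) :
    ∀ k, k ≤ n → (((List.finRange n).take k).map (fun m => Q n (d m))).prod = P n d k := by
  intro k
  induction k with
  | zero => intro _; simp [P_zero]
  | succ k ih =>
    intro hk
    have hk' : k < n := hk
    rw [List.take_succ]
    have : (List.finRange n)[k]? = some ⟨k, hk'⟩ := by
      rw [List.getElem?_eq_getElem (by simpa using hk')]
      simp [List.getElem_finRange, Fin.ext_iff]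
    rw [this]
    simp only [Option.toList_some, List.map_append, List.prod_append, List.map_cons,
      List.map_nil, List.prod_cons, List.prod_nil, mul_one]
    rw [ih (by omega), P_mul]

lemma P_n {n : ℕ} (d : Fin n → ℂ) : P n d n = Matrix.diagonal d := by
  ext i j
  simp only [P, Matrix.of_apply, Matrix.diagonal_apply]
  by_cases h : (i : ℕ) = (j : ℕ)
  · rw [if_neg (by omega), if_pos (by omega), if_pos (Fin.ext h)]
  · rw [if_neg (by omega), if_neg (by omega), if_neg (fun hh => h (congrArg Fin.val hh))]

end ToeplitzAux

theorem diagonal_is_product_of_n_toeplitz (n : ℕ) (d : Fin n → ℂ) :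
    ∃ L : List (Matrix (Fin n) (Fin n) ℂ),
      L.length = n ∧ (∀ T ∈ L, IsToeplitz T) ∧ L.prod = Matrix.diagonal d := by
  refine ⟨(List.finRange n).map (fun m => ToeplitzAux.Q n (d m)), by simp, ?_, ?_⟩
  · intro T hT
    simp only [List.mem_map] at hT
    obtain ⟨m, _, rfl⟩ := hT
    exact ToeplitzAux.Q_toeplitz _
  · have := ToeplitzAux.take_prod d n le_rfl
    rw [List.take_of_length_le (by simp)] at this
    rw [this, ToeplitzAux.P_n]
end

section
/- Every complex n×n matrix of rank 1 can be written as a product of three Toeplitz matrices. Explicitly, if M = λ·aᵀ where λ ∈ ℂⁿ is a column vector with λ₁ = 1 and a ∈ ℂⁿ is a nonzero row of M, then M = T₁T₂T₃, where T₁ is the lower triangular Toeplitz matrix with first column λ, T₂ is the Toeplitz matrix with a single 1 in position (1,n) and zeros elsewhere, and T₃ is the lower triangular Toeplitz matrix with last row a. -/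
theorem rank_one_explicit_toeplitz_factorization {n : ℕ} (hn : 0 < n)
    (M : Matrix (Fin n) (Fin n) ℂ) (hM : M.rank = 1)
    (lam a : Fin n → ℂ) (hlam : lam ⟨0, hn⟩ = 1) (ha : a ≠ 0)
    (hMla : M = Matrix.vecMulVec lam a) :
    ∃ T₁ T₂ T₃ : Matrix (Fin n) (Fin n) ℂ,
      (T₁ = Matrix.of fun (i j : Fin n) =>
        if h : (j : ℕ) ≤ (i : ℕ) then
          lam ⟨(i : ℕ) - (j : ℕ), lt_of_le_of_lt (Nat.sub_le _ _) i.isLt⟩ else 0) ∧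
      (T₂ = Matrix.of fun (i j : Fin n) =>
        if (i : ℕ) = 0 ∧ (j : ℕ) = n - 1 then 1 else 0) ∧
      (T₃ = Matrix.of fun (i j : Fin n) =>
        if h : (j : ℕ) ≤ (i : ℕ) then
          a ⟨n - 1 - ((i : ℕ) - (j : ℕ)), by omega⟩ else 0) ∧
      IsToeplitz T₁ ∧ IsToeplitz T₂ ∧ IsToeplitz T₃ ∧ M = T₁ * T₂ * T₃ := by
  refine ⟨_, _, _, rfl, rfl, rfl, ?_, ?_, ?_, ?_⟩
  · intro i j hi hj
    simp only [Matrix.of_apply]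
    split_ifs with h1 h2 h2 <;> try omega
    · congr 1
      exact Fin.ext (by first | omega | simp | (simp; omega))
    · rfl
  · intro i j hi hj
    simp only [Matrix.of_apply]
    split_ifs with h1 h2 h2 <;> simp_all <;> omega
  · intro i j hi hj
    simp only [Matrix.of_apply]
    split_ifs with h1 h2 h2 <;> try omega
    · congr 1
      exact Fin.ext (by first | omega | simp | (simp; omega))
    · rfl
  · have hTT : ∀ (p q : Fin n),
        ((Matrix.of fun (i j : Fin n) =>
          if h : (j : ℕ) ≤ (i : ℕ) then
            lam ⟨(i : ℕ) - (j : ℕ), lt_of_le_of_lt (Nat.sub_le _ _) i.isLt⟩ else 0) *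
        (Matrix.of fun (i j : Fin n) =>
          if (i : ℕ) = 0 ∧ (j : ℕ) = n - 1 then (1:ℂ) else 0)) p q =
          if (q : ℕ) = n - 1 then lam p else 0 := by
      intro p q
      rw [Matrix.mul_apply]
      rw [Finset.sum_eq_single (⟨0, hn⟩ : Fin n)]
      · simp only [Matrix.of_apply]
        split_ifs with h1 h2 h2 <;> simp_all
      · intro b _ hb
        simp only [Matrix.of_apply]
        have : (b : ℕ) ≠ 0 := fun h => hb (Fin.ext h)
        simp [this]
      · intro h; exact absurd (Finset.mem_univ _) h
    ext i j
    rw [Matrix.mul_apply]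
    simp only [hTT]
    rw [Finset.sum_eq_single (⟨n - 1, by omega⟩ : Fin n)]
    · simp only [Matrix.of_apply, hMla, Matrix.vecMulVec_apply]
      have hj : (j : ℕ) ≤ n - 1 := by omega
      rw [if_pos trivial, dif_pos hj]
      congr 2
      exact Fin.ext (by simp only [Fin.val_mk] <;> omega)
    · intro b _ hb
      have : (b : ℕ) ≠ n - 1 := fun h => hb (Fin.ext h)
      simp [this]
    · intro h; exact absurd (Finset.mem_univ _) h
end

section
/- If M ∈ ℂ^{n×n} has rank 1, then the Toeplitz number of M is at most 3, i.e., M is a product of at most 3 Toeplitz matrices. -/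
noncomputable def ToepNum {n : ℕ} (M : Matrix (Fin n) (Fin n) ℂ) : ℕ :=
  sInf {s | ∃ L : List (Matrix (Fin n) (Fin n) ℂ),
    L.length = s ∧ (∀ T ∈ L, IsToeplitz T) ∧ L.prod = M}

open Matrix

namespace Matrix

theorem exists_eq_vecMulVec_of_rank_le_one {K m n : Type*} [Field K] [Fintype n]
    [DecidableEq n] {M : Matrix m n K} (hM : M.rank ≤ 1) : ∃ u v, M = vecMulVec u v := by
  obtain ⟨w, hw⟩ := (Submodule.finrank_le_one_iff_isPrincipal _).mp hM
  have hcol (j : n) : M.col j ∈ Submodule.span K {w} := by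
    rw [← hw, ← mulVec_single_one]
    exact LinearMap.mem_range_self M.mulVecLin _
  choose c hc using fun j => Submodule.mem_span_singleton.mp (hcol j)
  refine ⟨w, c, ext fun i j => ?_⟩
  rw [vecMulVec_apply, mul_comm]
  exact (congrFun (hc j) i).symm

theorem mul_single_one_mul {α l m n o : Type*} [Semiring α] [Fintype m] [Fintype n]
    [DecidableEq m] [DecidableEq n] (A : Matrix l m α) (B : Matrix n o α) (k : m) (k' : n) :
    A * single k k' (1 : α) * B = vecMulVec (A.col k) (B.row k') := by
  rw [single_eq_single_vecMulVec_single, mul_vecMulVec, vecMulVec_mul, mulVec_single_one,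
    single_one_vecMul]

end Matrix

def toeplitzMatrix {n : ℕ} (f : ℤ → ℂ) : Matrix (Fin n) (Fin n) ℂ :=
  of fun i j => f (i - j)

theorem isToeplitz_toeplitzMatrix {n : ℕ} (f : ℤ → ℂ) :
    IsToeplitz (toeplitzMatrix (n := n) f) := by
  intro i j _ _
  simp only [toeplitzMatrix, of_apply]
  push_cast
  ring_nf

theorem isToeplitz_single_zero_last (m : ℕ) (c : ℂ) :
    IsToeplitz (single (0 : Fin (m + 1)) (Fin.last m) c) := by
  intro i j _ hj
  simp only [single_apply, Fin.ext_iff, Fin.val_last, Fin.val_zero]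
  rw [if_neg (by omega), if_neg (by omega)]

theorem toepNum_mul_mul_le_three {n : ℕ} {A B C : Matrix (Fin n) (Fin n) ℂ}
    (hA : IsToeplitz A) (hB : IsToeplitz B) (hC : IsToeplitz C) : ToepNum (A * B * C) ≤ 3 :=
  Nat.sInf_le ⟨[A, B, C], rfl, by simp [hA, hB, hC], by simp [mul_assoc]⟩

open Fin.CommRing in
theorem vecMulVec_eq_toeplitzMatrix_mul_single_mul {m : ℕ} (u v : Fin (m + 1) → ℂ) :
    vecMulVec u v = toeplitzMatrix (fun k => u k) * single 0 (Fin.last m) 1 *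
      toeplitzMatrix (fun k => v (m - k)) := by
  rw [mul_single_one_mul]
  congr 1 <;> ext i <;> simp [toeplitzMatrix]

theorem rank_one_toepnum_le_three {n : ℕ} (M : Matrix (Fin n) (Fin n) ℂ)
    (hM : M.rank = 1) : ToepNum M ≤ 3 := by
  obtain ⟨m, rfl⟩ : ∃ m, n = m + 1 :=
    Nat.exists_eq_add_of_le' (by simpa [hM] using M.rank_le_card_width)
  obtain ⟨u, v, rfl⟩ := exists_eq_vecMulVec_of_rank_le_one hM.le
  rw [vecMulVec_eq_toeplitzMatrix_mul_single_mul]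
  exact toepNum_mul_mul_le_three (isToeplitz_toeplitzMatrix _) (isToeplitz_single_zero_last m 1)
    (isToeplitz_toeplitzMatrix _)
end

section
/- Every 2×2 complex matrix can be written as a product of two Toeplitz matrices. -/
lemma isToeplitz_two (x y z : ℂ) : IsToeplitz !![x, y; z, x] := by
  intro i j hi hj
  have hi0 : i = 0 := by omega
  have hj0 : j = 0 := by omega
  subst hi0; subst hj0
  simp

theorem two_by_two_product_of_two_toeplitz (M : Matrix (Fin 2) (Fin 2) ℂ) :
    ∃ T₁ T₂ : Matrix (Fin 2) (Fin 2) ℂ,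
      IsToeplitz T₁ ∧ IsToeplitz T₂ ∧ T₁ * T₂ = M := by
  set a := M 0 0; set b := M 0 1; set c := M 1 0; set d := M 1 1
  have hM : M = !![a, b; c, d] := by
    ext i j; fin_cases i <;> fin_cases j <;> simp [a, b, c, d]
  by_cases hc : c ≠ 0
  · refine ⟨!![1, (a - d)/c, ; 0, 1], !![d, b - (a - d)/c * d; c, d],
      isToeplitz_two _ _ _, isToeplitz_two _ _ _, ?_⟩
    rw [hM]
    ext i j; fin_cases i <;> fin_cases j <;>
      simp [Matrix.mul_apply, Fin.sum_univ_succ] <;> field_simp <;> ring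
  · push_neg at hc
    by_cases hb : b ≠ 0
    · refine ⟨!![1, 0; (d - a)/b, 1], !![a, b; c - (d - a)/b * a, a],
        isToeplitz_two _ _ _, isToeplitz_two _ _ _, ?_⟩
      rw [hM]
      ext i j; fin_cases i <;> fin_cases j <;>
        simp [Matrix.mul_apply, Fin.sum_univ_succ] <;> field_simp <;> ring
    · push_neg at hb
      refine ⟨!![0, 1; d, 0], !![0, 1; a, 0],
        isToeplitz_two _ _ _, isToeplitz_two _ _ _, ?_⟩
      rw [hM, hb, hc]
      ext i j; fin_cases i <;> fin_cases j <;>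
        simp [Matrix.mul_apply, Fin.sum_univ_succ]
end

section
/- There exists a 3×3 complex matrix M with Toep(M) = 3; hence Toep₃ ≥ 3. In particular, diag(1,2,3) is not a product of two Toeplitz matrices but is a product of three Toeplitz matrices. -/
lemma hDmat : Matrix.diagonal ![(1:ℂ), 2, 3] = !![1,0,0;0,2,0;0,0,3] := by
  ext i j
  fin_cases i <;> fin_cases j <;> rfl

lemma no_two_factors (T₁ T₂ : Matrix (Fin 3) (Fin 3) ℂ)
    (h₁ : IsToeplitz T₁) (h₂ : IsToeplitz T₂)
    (h : T₁ * T₂ = Matrix.diagonal ![1, 2, 3]) : False := by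
  have t11 : T₁ 1 1 = T₁ 0 0 := (h₁ 0 0 (by norm_num) (by norm_num)).symm
  have t12 : T₁ 1 2 = T₁ 0 1 := (h₁ 0 1 (by norm_num) (by norm_num)).symm
  have t21 : T₁ 2 1 = T₁ 1 0 := (h₁ 1 0 (by norm_num) (by norm_num)).symm
  have t22 : T₁ 2 2 = T₁ 0 0 := by
    have h' : T₁ 1 1 = T₁ 2 2 := h₁ 1 1 (by norm_num) (by norm_num)
    rw [← h', t11]
  have s11 : T₂ 1 1 = T₂ 0 0 := (h₂ 0 0 (by norm_num) (by norm_num)).symm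
  have s12 : T₂ 1 2 = T₂ 0 1 := (h₂ 0 1 (by norm_num) (by norm_num)).symm
  have s21 : T₂ 2 1 = T₂ 1 0 := (h₂ 1 0 (by norm_num) (by norm_num)).symm
  have s22 : T₂ 2 2 = T₂ 0 0 := by
    have h' : T₂ 1 1 = T₂ 2 2 := h₂ 1 1 (by norm_num) (by norm_num)
    rw [← h', s11]
  rw [hDmat] at h
  have E : ∀ i j : Fin 3, T₁ i 0 * T₂ 0 j + T₁ i 1 * T₂ 1 j + T₁ i 2 * T₂ 2 j
      = (!![1,0,0;0,2,0;0,0,3] : Matrix (Fin 3) (Fin 3) ℂ) i j := by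
    intro i j
    rw [← h]
    simp [Matrix.mul_apply, Fin.sum_univ_three]
  have E11 := E 0 0; have E12 := E 0 1; have E13 := E 0 2
  have E21 := E 1 0; have E22 := E 1 1; have E23 := E 1 2
  have E31 := E 2 0; have E32 := E 2 1; have E33 := E 2 2
  simp only [t11, t12, t21, t22, s11, s12, s21, s22, Matrix.cons_val',
    Matrix.cons_val_zero, Matrix.cons_val_one, Matrix.head_cons, Matrix.head_fin_const,
    Matrix.cons_val_fin_one, Matrix.of_apply, Matrix.cons_val_two, Matrix.tail_cons,
    Matrix.empty_val'] at E11 E12 E13 E21 E22 E23 E31 E32 E33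
  -- abbreviations: a=T₁00 b=T₁01 c=T₁02 d=T₁10 e=T₁20; p=T₂00 q=T₂01 r=T₂02 s=T₂10 t=T₂20
  have ha : T₁ 0 0 = 0 := by
    linear_combination (T₁ 0 0 * E11 + T₁ 1 0 * E12 + T₁ 2 0 * E13
      - T₁ 0 0 * E33 - T₁ 0 1 * E32 - T₁ 0 2 * E31) / 2
  have hb : T₁ 0 1 = 0 := by
    linear_combination (T₁ 0 1 * E11 + T₁ 0 0 * E12 + T₁ 1 0 * E13)
      - (T₁ 0 1 * E22 + T₁ 0 0 * E23 + T₁ 0 2 * E21)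
  have hd : T₁ 1 0 = 0 := by
    linear_combination (T₁ 0 0 * E21 + T₁ 1 0 * E22 + T₁ 2 0 * E23)
      - (T₁ 1 0 * E33 + T₁ 0 0 * E32 + T₁ 0 1 * E31)
  rw [ha, hb, hd] at E22
  simp at E22

lemma toep1 : IsToeplitz (!![1,0,1; 0,1,0; -(1/2),0,1] : Matrix (Fin 3) (Fin 3) ℂ) := by
  intro i j hi hj
  fin_cases i <;> fin_cases j <;>
    first | rfl | exact absurd hi (of_decide_eq_false rfl)
          | exact absurd hj (of_decide_eq_false rfl)

lemma toep2 : IsToeplitz (!![2,0,-2; 0,2,0; -1,0,2] : Matrix (Fin 3) (Fin 3) ℂ) := by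
  intro i j hi hj
  fin_cases i <;> fin_cases j <;>
    first | rfl | exact absurd hi (of_decide_eq_false rfl)
          | exact absurd hj (of_decide_eq_false rfl)

lemma toep3 : IsToeplitz (!![1,0,0; 0,1,0; 2/3,0,1] : Matrix (Fin 3) (Fin 3) ℂ) := by
  intro i j hi hj
  fin_cases i <;> fin_cases j <;>
    first | rfl | exact absurd hi (of_decide_eq_false rfl)
          | exact absurd hj (of_decide_eq_false rfl)

lemma prod3 : (!![1,0,1; 0,1,0; -(1/2),0,1] : Matrix (Fin 3) (Fin 3) ℂ)
    * !![2,0,-2; 0,2,0; -1,0,2] * !![1,0,0; 0,1,0; 2/3,0,1]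
    = Matrix.diagonal ![(1:ℂ), 2, 3] := by
  rw [hDmat]
  ext i j
  fin_cases i <;> fin_cases j <;>
    simp [Matrix.mul_apply, Fin.sum_univ_three, Matrix.vecHead, Matrix.vecTail] <;> norm_num

lemma three_le_length (L : List (Matrix (Fin 3) (Fin 3) ℂ))
    (hT : ∀ T ∈ L, IsToeplitz T) (hp : L.prod = Matrix.diagonal ![1, 2, 3]) :
    3 ≤ L.length := by
  match L, hT, hp with
  | [], _, hp =>
    exfalso
    rw [List.prod_nil, hDmat] at hp
    have := congrFun (congrFun hp 1) 1
    simp [Matrix.one_apply] at this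
  | [A], hT, hp =>
    exfalso
    rw [List.prod_singleton] at hp
    have hA : IsToeplitz A := hT A (by simp)
    rw [hp] at hA
    have := hA 0 0 (by norm_num) (by norm_num)
    rw [hDmat] at this
    simp at this
  | [A, B], hT, hp =>
    exfalso
    have hp' : A * B = Matrix.diagonal ![1, 2, 3] := by
      rw [← hp]; simp
    exact no_two_factors A B (hT A (by simp)) (hT B (by simp)) hp'
  | (A :: B :: C :: L'), _, _ =>
    simp only [List.length_cons]
    omega

lemma toepnum_diag : ToepNum (Matrix.diagonal ![(1 : ℂ), 2, 3]) = 3 := by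
  have hmem : 3 ∈ {s | ∃ L : List (Matrix (Fin 3) (Fin 3) ℂ),
      L.length = s ∧ (∀ T ∈ L, IsToeplitz T) ∧ L.prod = Matrix.diagonal ![(1 : ℂ), 2, 3]} := by
    refine ⟨[!![1,0,1; 0,1,0; -(1/2),0,1], !![2,0,-2; 0,2,0; -1,0,2],
      !![1,0,0; 0,1,0; 2/3,0,1]], rfl, ?_, ?_⟩
    · intro T hTm
      simp only [List.mem_cons, List.not_mem_nil, or_false] at hTm
      rcases hTm with rfl | rfl | rfl
      · exact toep1
      · exact toep2
      · exact toep3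
    · rw [← prod3]
      simp only [List.prod_cons, List.prod_nil, mul_one, ← mul_assoc]
  refine le_antisymm (Nat.sInf_le hmem) (le_csInf ⟨3, hmem⟩ ?_)
  rintro n ⟨L, hlen, hT, hp⟩
  exact hlen ▸ three_le_length L hT hp

theorem exists_matrix_with_toepnum_three :
    (∃ M : Matrix (Fin 3) (Fin 3) ℂ, ToepNum M = 3) ∧
    ToepNum (Matrix.diagonal ![(1 : ℂ), 2, 3]) = 3 ∧
    (¬ ∃ T₁ T₂ : Matrix (Fin 3) (Fin 3) ℂ,
      IsToeplitz T₁ ∧ IsToeplitz T₂ ∧ T₁ * T₂ = Matrix.diagonal ![1, 2, 3]) ∧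
    (∃ T₁ T₂ T₃ : Matrix (Fin 3) (Fin 3) ℂ,
      IsToeplitz T₁ ∧ IsToeplitz T₂ ∧ IsToeplitz T₃ ∧
      T₁ * T₂ * T₃ = Matrix.diagonal ![1, 2, 3]) := by
  refine ⟨⟨_, toepnum_diag⟩, toepnum_diag, ?_, ?_⟩
  · rintro ⟨T₁, T₂, h₁, h₂, h⟩
    exact no_two_factors T₁ T₂ h₁ h₂ h
  · exact ⟨_, _, _, toep1, toep2, toep3, prod3⟩
end

section
/- Every n×n complex matrix of rank n−1 can be written as P·T₁·T₂ where P is invertible and T₁, T₂ are Toeplitz matrices. -/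
/-!
Let `v` span `ker M` and let `k` be the first index with `v k ≠ 0`. Evaluating at the nilpotent
shift `S` the polynomial with coefficients `v k, v (k+1), …` gives a lower-triangular Toeplitz
matrix `A` with `A eₖ = v` and diagonal `v k ≠ 0`, so `A` is invertible. Polynomials in `S` form a
finite-dimensional subalgebra, which therefore contains `A⁻¹`; hence `A⁻¹` is Toeplitz too. The
Toeplitz 0/1 matrix `T₁` with ones on the `(k+1)`-st superdiagonal and the `(n-k)`-th subdiagonal
sends the basis vectors other than `eₖ` to distinct basis vectors and kills `eₖ`, so
`ker (T₁ A⁻¹) = A (ker T₁) = ℂ v = ker M`. Two matrices with the same kernel differ by an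
invertible left factor, which gives `M = P T₁ A⁻¹`.
-/

open Polynomial Matrix LinearMap Submodule

theorem Subalgebra.units_inv_mem_of_finiteDimensional {K A : Type*} [Field K] [Ring A]
    [Algebra K A] (B : Subalgebra K A) [FiniteDimensional K B] (u : Aˣ) (hu : (u : A) ∈ B) :
    ((u⁻¹ : Aˣ) : A) ∈ B := by
  let x : B := ⟨u, hu⟩
  have hsurj : Function.Surjective (LinearMap.mulLeft K x) :=
    LinearMap.injective_iff_surjective.mp fun y z hyz =>
      Subtype.ext (u.mul_right_inj.mp (congrArg Subtype.val hyz))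
  obtain ⟨y, hy⟩ := hsurj 1
  rw [Units.inv_eq_of_mul_eq_one_right (congrArg Subtype.val hy)]
  exact y.2

theorem LinearMap.exists_linearEquiv_comp_eq_of_ker_eq {K V W : Type*} [DivisionRing K]
    [AddCommGroup V] [Module K V] [AddCommGroup W] [Module K W] [FiniteDimensional K W]
    {f g : V →ₗ[K] W} (h : ker f = ker g) : ∃ e : W ≃ₗ[K] W, e.toLinearMap ∘ₗ g = f := by
  let φ : range g ≃ₗ[K] range f :=
    g.quotKerEquivRange.symm ≪≫ₗ quotEquivOfEq _ _ h.symm ≪≫ₗ f.quotKerEquivRange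
  have hφ (x : V) : (φ (g.rangeRestrict x) : W) = f x := by
    have hg : g.quotKerEquivRange.symm (g.rangeRestrict x) = (ker g).mkQ x :=
      g.quotKerEquivRange_symm_apply_image x _
    simp [φ, hg, quotKerEquivRange_apply_mk]
  obtain ⟨U, hU⟩ := (range g).exists_isCompl
  obtain ⟨U', hU'⟩ := (range f).exists_isCompl
  have hdim : Module.finrank K U = Module.finrank K U' := by
    have := φ.finrank_eq
    have := finrank_add_eq_of_isCompl hU
    have := finrank_add_eq_of_isCompl hU'
    omega
  refine ⟨(prodEquivOfIsCompl _ _ hU).symm ≪≫ₗ φ.prodCongr (.ofFinrankEq U U' hdim) ≪≫ₗ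
    prodEquivOfIsCompl _ _ hU', LinearMap.ext fun x => ?_⟩
  have := prodEquivOfIsCompl_symm_apply_left _ _ hU (g.rangeRestrict x)
  simp_all

theorem Matrix.exists_isUnit_mul_eq_of_ker_mulVecLin_eq {K m n : Type*} [Field K] [Fintype m]
    [DecidableEq m] [Fintype n] {M N : Matrix m n K}
    (h : ker M.mulVecLin = ker N.mulVecLin) : ∃ P : Matrix m m K, IsUnit P ∧ M = P * N := by
  obtain ⟨e, he⟩ := LinearMap.exists_linearEquiv_comp_eq_of_ker_eq h
  refine ⟨LinearMap.toMatrix' e.toLinearMap, isUnit_toMatrix'_iff.mpr ?_, ?_⟩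
  · exact (Module.End.isUnit_iff _).mpr e.bijective
  · refine ext_iff_mulVec.mpr fun v => ?_
    rw [← mulVec_mulVec, toMatrix'_mulVec]
    exact (LinearMap.congr_fun he v).symm

theorem Matrix.exists_ker_mulVecLin_eq_span_singleton {K m n : Type*} [Field K] [Fintype m]
    [Fintype n] (M : Matrix m n K) (h : M.rank + 1 = Fintype.card n) :
    ∃ v ≠ 0, ker M.mulVecLin = K ∙ v := by
  have hker : Module.finrank K (ker M.mulVecLin) = 1 := by
    have := M.mulVecLin.finrank_range_add_finrank_ker
    rw [Module.finrank_fintype_fun_eq_card] at this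
    rw [Matrix.rank] at h
    omega
  obtain ⟨⟨v, hv⟩, hv0⟩ := Module.finrank_pos_iff_exists_ne_zero.mp (hker ▸ one_pos)
  have hv0 : v ≠ 0 := by simpa using hv0
  exact ⟨v, hv0, eq_span_singleton_of_mem_of_finrank_eq_one hker hv hv0⟩

theorem Matrix.ker_mulVecLin_mul_units_inv {R n : Type*} [CommSemiring R] [Fintype n]
    [DecidableEq n] (N : Matrix n n R) (u : (Matrix n n R)ˣ) :
    ker (N * ((u⁻¹ : (Matrix n n R)ˣ) : Matrix n n R)).mulVecLin =
      (ker N.mulVecLin).map (u : Matrix n n R).mulVecLin := by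
  ext x
  simp only [mem_ker, mem_map, mulVecLin_apply]
  constructor
  · intro hx
    refine ⟨_, (mulVec_mulVec x N _).trans hx, ?_⟩
    rw [mulVec_mulVec, Units.mul_inv, one_mulVec]
  · rintro ⟨y, hy, rfl⟩
    rwa [mulVec_mulVec, Matrix.mul_assoc, Units.inv_mul, Matrix.mul_one]

section shiftMatrix

variable {R : Type*} {n : ℕ}

variable (R n) in
def shiftMatrix [Zero R] [One R] : Matrix (Fin n) (Fin n) R :=
  of fun i j => if (i : ℕ) = j + 1 then 1 else 0

theorem shiftMatrix_pow_apply [Semiring R] (m : ℕ) (i j : Fin n) :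
    (shiftMatrix R n ^ m) i j = if (i : ℕ) = j + m then 1 else 0 := by
  induction m generalizing i j with
  | zero => simp [one_apply, Fin.ext_iff]
  | succ m ih =>
    rw [pow_succ, mul_apply]
    simp_rw [ih]
    simp only [shiftMatrix, of_apply, mul_ite, mul_one, mul_zero]
    by_cases hj : (j : ℕ) + 1 < n
    · rw [Fintype.sum_eq_single ⟨j + 1, hj⟩ fun l hl => if_neg fun h => hl (Fin.ext h)]
      simp only [if_true]
      congr 1
      simp only [eq_iff_iff]
      omega
    · rw [Finset.sum_eq_zero fun l _ => if_neg (by omega), if_neg (by omega)]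

theorem aeval_shiftMatrix_apply [CommSemiring R] (p : R[X]) (i j : Fin n) :
    aeval (shiftMatrix R n) p i j = if (j : ℕ) ≤ i then p.coeff (i - j) else 0 := by
  induction p using Polynomial.induction_on' with
  | add p q hp hq =>
    simp only [map_add, Matrix.add_apply, hp, hq, coeff_add]
    split_ifs <;> simp
  | monomial m a =>
    rw [aeval_monomial, ← Algebra.smul_def, Matrix.smul_apply, shiftMatrix_pow_apply,
      coeff_monomial]
    split_ifs <;> first | omega | simp

theorem isLowerTriangular_aeval_shiftMatrix [CommSemiring R] (p : R[X]) :
    (aeval (shiftMatrix R n) p).IsLowerTriangular := fun i j hij => by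
  have : i < j := OrderDual.toDual_lt_toDual.mp hij
  rw [aeval_shiftMatrix_apply, if_neg (by omega)]

theorem det_aeval_shiftMatrix [CommRing R] (p : R[X]) :
    (aeval (shiftMatrix R n) p).det = p.coeff 0 ^ n := by
  rw [det_of_isLowerTriangular _ (isLowerTriangular_aeval_shiftMatrix p)]
  simp [aeval_shiftMatrix_apply]

theorem exists_aeval_shiftMatrix_mulVec_single [CommSemiring R] (v : Fin n → R) (k : Fin n)
    (hv : ∀ i < k, v i = 0) :
    ∃ p : R[X], p.coeff 0 = v k ∧ aeval (shiftMatrix R n) p *ᵥ Pi.single k 1 = v := by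
  let w : ℕ → R := fun m => if h : m < n then v ⟨m, h⟩ else 0
  let p : R[X] := ∑ m ∈ Finset.range n, C (w (k + m)) * X ^ m
  have hp (m : ℕ) : p.coeff m = w (k + m) := by
    simp only [p, finsetSum_coeff, coeff_C_mul_X_pow, Finset.sum_ite_eq, Finset.mem_range]
    split_ifs with hm
    · rfl
    · simp only [w]
      rw [dif_neg (by omega)]
  refine ⟨p, by simp [hp, w], funext fun i => ?_⟩
  rw [mulVec_single_one, col_apply, aeval_shiftMatrix_apply]
  split_ifs with hki
  · simp [hp, w, Nat.add_sub_cancel' hki]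
  · exact (hv i (not_le.mp hki)).symm

end shiftMatrix

theorem isToeplitz_aeval_shiftMatrix {n : ℕ} (p : ℂ[X]) :
    IsToeplitz (aeval (shiftMatrix ℂ n) p) := by
  intro i j hi hj
  simp only [aeval_shiftMatrix_apply, Nat.add_le_add_iff_right, Nat.add_sub_add_right]

def offsetDiagonals (n k : ℕ) : Matrix (Fin n) (Fin n) ℂ :=
  of fun i j => if (j : ℕ) = i + (k + 1) ∨ (i : ℕ) = j + (n - k) then 1 else 0

theorem isToeplitz_offsetDiagonals (n k : ℕ) : IsToeplitz (offsetDiagonals n k) := by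
  intro i j hi hj
  simp only [offsetDiagonals, of_apply]
  congr 1
  simp only [eq_iff_iff]
  omega

theorem offsetDiagonals_col_self {n : ℕ} (k : Fin n) : (offsetDiagonals n k).col k = 0 := by
  ext i
  simp only [col_apply, offsetDiagonals, of_apply, Pi.zero_apply]
  exact if_neg (by omega)

theorem exists_offsetDiagonals_row_eq_single {n : ℕ} {j k : Fin n} (hjk : j ≠ k) :
    ∃ i, offsetDiagonals n k i = Pi.single j 1 := by
  obtain hlt | hgt := (Fin.val_ne_of_ne hjk).lt_or_gt
  on_goal 1 => refine ⟨⟨j + (n - k), by omega⟩, ?_⟩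
  on_goal 2 => refine ⟨⟨j - (k + 1), by omega⟩, ?_⟩
  all_goals
    funext l
    simp only [offsetDiagonals, of_apply, Pi.single_apply, Fin.ext_iff]
    congr 1
    simp only [eq_iff_iff]
    omega

theorem ker_offsetDiagonals {n : ℕ} (k : Fin n) :
    ker (offsetDiagonals n k).mulVecLin = ℂ ∙ Pi.single k 1 := by
  ext y
  rw [mem_ker, mulVecLin_apply, mem_span_singleton]
  constructor
  · intro hy
    refine ⟨y k, funext fun j => ?_⟩
    obtain rfl | hjk := eq_or_ne j k
    · simp
    obtain ⟨i, hi⟩ := exists_offsetDiagonals_row_eq_single hjk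
    have hyj := congrFun hy i
    rw [mulVec, hi, single_one_dotProduct] at hyj
    simp [hjk, hyj]
  · rintro ⟨a, rfl⟩
    rw [mulVec_smul, mulVec_single_one, offsetDiagonals_col_self, smul_zero]

theorem exists_isToeplitz_ker_mul_eq_span_singleton {n : ℕ} {v : Fin n → ℂ} (hv : v ≠ 0) :
    ∃ T₁ T₂ : Matrix (Fin n) (Fin n) ℂ,
      IsToeplitz T₁ ∧ IsToeplitz T₂ ∧ ker (T₁ * T₂).mulVecLin = ℂ ∙ v := by
  obtain ⟨k, hk, hmin⟩ := wellFounded_lt.has_min {i | v i ≠ 0} (Function.ne_iff.mp hv)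
  obtain ⟨p, hp0, hpv⟩ := exists_aeval_shiftMatrix_mulVec_single v k fun i hi =>
    not_not.mp fun hvi => hmin i hvi hi
  have hA : IsUnit (aeval (shiftMatrix ℂ n) p) := by
    rw [Matrix.isUnit_iff_isUnit_det, det_aeval_shiftMatrix, hp0]
    exact (Ne.isUnit hk).pow n
  obtain ⟨r, hr⟩ := (AlgHom.mem_range _).mp <|
    Subalgebra.units_inv_mem_of_finiteDimensional _ hA.unit (AlgHom.mem_range_self _ p)
  refine ⟨offsetDiagonals n k, aeval (shiftMatrix ℂ n) r, isToeplitz_offsetDiagonals n k,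
    isToeplitz_aeval_shiftMatrix r, ?_⟩
  rw [hr, ker_mulVecLin_mul_units_inv, ker_offsetDiagonals, Submodule.map_span,
    Set.image_singleton, mulVecLin_apply, IsUnit.unit_spec, hpv]

theorem rank_n_sub_one_factorization {n : ℕ} (M : Matrix (Fin n) (Fin n) ℂ)
    (hM : M.rank = n - 1) :
    ∃ P T₁ T₂ : Matrix (Fin n) (Fin n) ℂ,
      IsUnit P ∧ IsToeplitz T₁ ∧ IsToeplitz T₂ ∧ M = P * T₁ * T₂ := by
  rcases n.eq_zero_or_pos with rfl | hn
  · exact ⟨1, 1, 1, isUnit_one, fun i => i.elim0, fun i => i.elim0, Subsingleton.elim _ _⟩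
  obtain ⟨v, hv, hMv⟩ := M.exists_ker_mulVecLin_eq_span_singleton (by rw [hM, Fintype.card_fin]; omega)
  obtain ⟨T₁, T₂, hT₁, hT₂, hT⟩ := exists_isToeplitz_ker_mul_eq_span_singleton hv
  obtain ⟨P, hP, rfl⟩ := exists_isUnit_mul_eq_of_ker_mulVecLin_eq (hMv.trans hT.symm)
  exact ⟨P, T₁, T₂, hP, hT₁, hT₂, (mul_assoc P T₁ T₂).symm⟩
end

section
/- The matrix diag(1,2,3,4) can be written as a product of three 4×4 Toeplitz matrices. Explicitly, diag(1,2,3,4) = T₁T₂T₃ with T₁ = [[0,−1,0,2],[1,0,−1,0],[0,1,0,−1],[−1/3,0,1,0]], T₂ = [[0,1,0,3],[1,0,1,0],[0,1,0,1],[1/2,0,1,0]], T₃ = [[0,0,6,0],[0,0,0,6],[1,0,0,0],[0,1,0,0]]. -/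
theorem diag1234_product_of_three_toeplitz :
    IsToeplitz (!![0, -1, 0, 2; 1, 0, -1, 0; 0, 1, 0, -1; -1/3, 0, 1, 0] :
      Matrix (Fin 4) (Fin 4) ℂ) ∧
    IsToeplitz (!![0, 1, 0, 3; 1, 0, 1, 0; 0, 1, 0, 1; 1/2, 0, 1, 0] :
      Matrix (Fin 4) (Fin 4) ℂ) ∧
    IsToeplitz (!![0, 0, 6, 0; 0, 0, 0, 6; 1, 0, 0, 0; 0, 1, 0, 0] :
      Matrix (Fin 4) (Fin 4) ℂ) ∧
    (!![0, -1, 0, 2; 1, 0, -1, 0; 0, 1, 0, -1; -1/3, 0, 1, 0] :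
        Matrix (Fin 4) (Fin 4) ℂ) *
      !![0, 1, 0, 3; 1, 0, 1, 0; 0, 1, 0, 1; 1/2, 0, 1, 0] *
      !![0, 0, 6, 0; 0, 0, 0, 6; 1, 0, 0, 0; 0, 1, 0, 0] =
      Matrix.diagonal ![1, 2, 3, 4] := by
  refine ⟨?_, ?_, ?_, ?_⟩
  · intro i j hi hj; fin_cases i <;> fin_cases j <;>
      first
      | exact absurd hj (by decide)
      | exact absurd hi (by decide)
      | norm_num [Matrix.vecHead, Matrix.vecTail]
  · intro i j hi hj; fin_cases i <;> fin_cases j <;>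
      first
      | exact absurd hj (by decide)
      | exact absurd hi (by decide)
      | norm_num [Matrix.vecHead, Matrix.vecTail]
  · intro i j hi hj; fin_cases i <;> fin_cases j <;>
      first
      | exact absurd hj (by decide)
      | exact absurd hi (by decide)
      | norm_num [Matrix.vecHead, Matrix.vecTail]
  · ext i j
    fin_cases i <;> fin_cases j <;>
      simp [Matrix.mul_apply, Fin.sum_univ_succ, Matrix.diagonal] <;> norm_num
end

section
/- Let d₁, d₂, d₃, d₄ ∈ ℂ with d₁d₂d₃d₄(d₁d₄ − d₂d₃)(d₃ − d₄)(d₁ − d₂) ≠ 0. Then diag(d₁,d₂,d₃,d₄) can be written as a product of three 4×4 Toeplitz matrices. -/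
theorem isToeplitz_of_castSucc_succ {n : ℕ} (M : Matrix (Fin (n + 1)) (Fin (n + 1)) ℂ)
    (h : ∀ i j : Fin n, M i.castSucc j.castSucc = M i.succ j.succ) : IsToeplitz M := by
  intro i j hi hj
  exact h ⟨i, by omega⟩ ⟨j, by omega⟩

namespace Chessboard

variable {R : Type*} [CommRing R]

def A (a₀ a₆ : R) : Matrix (Fin 4) (Fin 4) R :=
  !![0, 1, 0, a₆; 1, 0, 1, 0; 0, 1, 0, 1; a₀, 0, 1, 0]

def B (b₀ b₆ : R) : Matrix (Fin 4) (Fin 4) R :=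
  !![0, 1, 0, b₆; -1, 0, 1, 0; 0, -1, 0, 1; b₀, 0, -1, 0]

def C (c₁ c₅ : R) : Matrix (Fin 4) (Fin 4) R :=
  !![0, 0, c₅, 0; 0, 0, 0, c₅; c₁, 0, 0, 0; 0, c₁, 0, 0]

theorem isToeplitz_A (a₀ a₆ : ℂ) : IsToeplitz (A a₀ a₆) :=
  isToeplitz_of_castSucc_succ _ fun i j => by fin_cases i <;> fin_cases j <;> rfl

theorem isToeplitz_B (b₀ b₆ : ℂ) : IsToeplitz (B b₀ b₆) :=
  isToeplitz_of_castSucc_succ _ fun i j => by fin_cases i <;> fin_cases j <;> rfl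

theorem isToeplitz_C (c₁ c₅ : ℂ) : IsToeplitz (C c₁ c₅) :=
  isToeplitz_of_castSucc_succ _ fun i j => by fin_cases i <;> fin_cases j <;> rfl

theorem A_mul_B_mul_C (a₀ a₆ b₀ b₆ c₁ c₅ : R) :
    A a₀ a₆ * B b₀ b₆ * C c₁ c₅ =
      !![(1 - a₆) * c₁, 0, (a₆ * b₀ - 1) * c₅, 0;
        0, (b₆ + 1) * c₁, 0, 0;
        0, 0, (b₀ - 1) * c₅, 0;
        0, (a₀ * b₆ + 1) * c₁, 0, (a₀ - 1) * c₅] := by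
  ext i j
  fin_cases i <;> fin_cases j <;>
    simp [A, B, C, Matrix.mul_apply, Fin.sum_univ_four] <;> ring

theorem A_mul_B_mul_C_eq_diagonal {a₀ a₆ b₀ b₆ c₁ c₅ d₁ d₂ d₃ d₄ : R}
    (hab : a₆ * b₀ = 1) (hba : a₀ * b₆ = -1) (h₁ : (1 - a₆) * c₁ = d₁)
    (h₂ : (b₆ + 1) * c₁ = d₂) (h₃ : (b₀ - 1) * c₅ = d₃) (h₄ : (a₀ - 1) * c₅ = d₄) :
    A a₀ a₆ * B b₀ b₆ * C c₁ c₅ = Matrix.diagonal ![d₁, d₂, d₃, d₄] := by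
  rw [A_mul_B_mul_C, hab, hba, h₁, h₂, h₃, h₄]
  ext i j
  fin_cases i <;> fin_cases j <;> simp

end Chessboard

open Chessboard in
theorem generic_diag_4x4_product_of_three_toeplitz (d₁ d₂ d₃ d₄ : ℂ)
    (h : d₁ * d₂ * d₃ * d₄ * (d₁ * d₄ - d₂ * d₃) * (d₃ - d₄) * (d₁ - d₂) ≠ 0) :
    ∃ T₁ T₂ T₃ : Matrix (Fin 4) (Fin 4) ℂ,
      IsToeplitz T₁ ∧ IsToeplitz T₂ ∧ IsToeplitz T₃ ∧
      T₁ * T₂ * T₃ = Matrix.diagonal ![d₁, d₂, d₃, d₄] := by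
  simp only [mul_ne_zero_iff] at h
  obtain ⟨⟨⟨⟨⟨⟨h₁, h₂⟩, h₃⟩, h₄⟩, hD⟩, h₃₄⟩, h₁₂⟩ := h
  generalize hDdef : d₁ * d₄ - d₂ * d₃ = D at hD
  refine ⟨A (d₁ * (d₃ - d₄) / (d₃ * (d₁ - d₂))) (d₄ * (d₁ - d₂) / (d₂ * (d₃ - d₄))),
    B (d₂ * (d₃ - d₄) / (d₄ * (d₁ - d₂))) (-(d₃ * (d₁ - d₂)) / (d₁ * (d₃ - d₄))),
    C (-(d₁ * d₂ * (d₃ - d₄)) / D) (-(d₃ * d₄ * (d₁ - d₂)) / D),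
    isToeplitz_A _ _, isToeplitz_B _ _, isToeplitz_C _ _, ?_⟩
  apply A_mul_B_mul_C_eq_diagonal <;> field_simp <;> rw [← hDdef] <;> ring
end

section
/- Let d, e, f ∈ ℂ and let p₁,…,p₉ be the nine polynomial entries of T₁T₂ − diag(d,e,f) in the variables a₀,…,a₄,b₀,…,b₄ (entries of two generic 3×3 Toeplitz matrices T₁, T₂). Then there exist polynomials q₁,…,q₉ such that Σᵢ qᵢpᵢ = e(d−e)(f−d)(f−e). In particular, when e(d−e)(f−d)(f−e) ≠ 0, the system T₁T₂ = diag(d,e,f) has no solution. -/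
open MvPolynomial

/-- Variables: `X 0,…,X 4` are `a₀,…,a₄`; `X 5,…,X 9` are `b₀,…,b₄`. -/
noncomputable def pSys (d e f : ℂ) : Fin 9 → MvPolynomial (Fin 10) ℂ :=
  ![X 2 * X 7 + X 3 * X 6 + X 4 * X 5 - C d,
    X 2 * X 8 + X 3 * X 7 + X 4 * X 6,
    X 2 * X 9 + X 3 * X 8 + X 4 * X 7,
    X 1 * X 7 + X 2 * X 6 + X 3 * X 5,
    X 1 * X 8 + X 2 * X 7 + X 3 * X 6 - C e,
    X 1 * X 9 + X 2 * X 8 + X 3 * X 7,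
    X 0 * X 7 + X 1 * X 6 + X 2 * X 5,
    X 0 * X 8 + X 1 * X 7 + X 2 * X 6,
    X 0 * X 9 + X 1 * X 8 + X 2 * X 7 - C f]

noncomputable def qSys (d e f : ℂ) : Fin 9 → MvPolynomial (Fin 10) ℂ :=
  ![(C f - C e) * (X 2 * X 7 * (C d - C e) + X 3 * X 6 * (C d - C f)),
    X 3 * X 5 * (C d - C f) * (C e - C f),
    X 2 * X 5 * (C d - C e) * (C e - C f),
    X 1 * X 9 * (C d - C f) * (C d - C e) - X 2 * X 8 * (C d - C e) * (C e - C f)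
      + X 3 * X 7 * (C d - C f) * (C d + C f - 2 * C e),
    (C d - C f) * (X 1 * X 8 * (C e - C d) + X 3 * X 6 * (C e - C f)
      + (C f - C e) * (C d - C e)),
    (C d - C e) * (X 2 * X 6 * (C e - C f) + X 3 * X 5 * (C f - C d)),
    X 2 * X 9 * (C d - C e) * (C f - C e) + X 3 * X 8 * (C d - C f) * (C d + C f - 2 * C e),
    (C f - C d) * (X 1 * X 9 * (C d - C e) + X 3 * X 7 * (C d + C f - 2 * C e)),
    (C d - C e) * (X 1 * X 8 * (C d - C f) + X 2 * X 7 * (C e - C f))]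

theorem nullstellensatz_certificate_for_diagonal (d e f : ℂ) :
    (∃ q : Fin 9 → MvPolynomial (Fin 10) ℂ,
      ∑ i, q i * pSys d e f i = C (e * (d - e) * (f - d) * (f - e))) ∧
    (e * (d - e) * (f - d) * (f - e) ≠ 0 →
      ¬ ∃ x : Fin 10 → ℂ, ∀ i, eval x (pSys d e f i) = 0) := by
  have hsum : ∑ i, qSys d e f i * pSys d e f i = C (e * (d - e) * (f - d) * (f - e)) := by
    simp only [pSys, qSys, Fin.sum_univ_succ, Fin.sum_univ_zero, Matrix.cons_val_zero,
      Matrix.cons_val_succ, map_mul, map_sub]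
    ring
  refine ⟨⟨qSys d e f, hsum⟩, fun hne ⟨x, hx⟩ => ?_⟩
  have := congrArg (eval x) hsum
  simp only [map_sum, map_mul, eval_C] at this
  apply hne
  rw [← this]
  exact Finset.sum_eq_zero fun i _ => by rw [hx i, mul_zero]
end

section
/- Let d, f ∈ ℂ with e ∈ ℂ, e ≠ 0, and d = f. Then diag(d,e,d) = T₁T₂ where T₁ = [[1,0,1],[0,1,0],[(e−d)/e,0,1]] and T₂ = [[e,0,−e],[0,e,0],[d−e,0,e]], and both T₁ and T₂ are Toeplitz. -/
theorem diag_ded_factorization (d e : ℂ) (he : e ≠ 0) :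
    IsToeplitz (!![1, 0, 1; 0, 1, 0; (e - d) / e, 0, 1] : Matrix (Fin 3) (Fin 3) ℂ) ∧
    IsToeplitz (!![e, 0, -e; 0, e, 0; d - e, 0, e] : Matrix (Fin 3) (Fin 3) ℂ) ∧
    (!![1, 0, 1; 0, 1, 0; (e - d) / e, 0, 1] : Matrix (Fin 3) (Fin 3) ℂ) *
      !![e, 0, -e; 0, e, 0; d - e, 0, e] = Matrix.diagonal ![d, e, d] := by
  refine ⟨isToeplitz_fin_three _ _ _ _ _, isToeplitz_fin_three _ _ _ _ _, ?_⟩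
  have hquot : (e - d) / e * e = e - d := div_mul_cancel₀ _ he
  simp [Matrix.diagonal_vec3, hquot]
end
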